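/- arXiv:0704.0751 — 5 statements merged into one kernel-verified Lean document; each statement's English description precedes it below -/
import Mathlib

section
/- Let D ⊆ ℂ^N be a convex domain. The following are equivalent: (1) D is biholomorphic to a bounded domain in ℂ^N; (2) every holomorphic map from ℂ to D is constant (D contains no nonconstant entire curves); (3) D contains no complex affine line; (4) there exist ℂ-linearly independent complex linear functionals L_1, …, L_N : ℂ^N → ℂ and real numbers a_1, …, a_N such that D ⊆ {z ∈ ℂ^N : Re L_j(z) > a_j for all j = 1, …, N} (D has N linearly independent separating real hyperplanes). -/
/-- A convex domain in `ℂ^N`: a nonempty open convex subset. -/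
def IsConvexDomain {N : ℕ} (D : Set (Fin N → ℂ)) : Prop :=
  IsOpen D ∧ Convex ℝ D ∧ D.Nonempty

/-- `S` contains a complex affine line `{p + ζ • v : ζ ∈ ℂ}` with `v ≠ 0`. -/
def ContainsComplexLine {E : Type*} [AddCommGroup E] [Module ℂ E] (S : Set E) : Prop :=
  ∃ p v : E, v ≠ 0 ∧ ∀ ζ : ℂ, p + ζ • v ∈ S

/-- `D` is biholomorphic to a bounded domain in `ℂ^N`: there is a bounded nonempty open
set `U` and a holomorphic bijection `F : D → U` with holomorphic inverse. -/
def BiholToBounded {N : ℕ} (D : Set (Fin N → ℂ)) : Prop :=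
  ∃ (U : Set (Fin N → ℂ)) (F G : (Fin N → ℂ) → (Fin N → ℂ)),
    IsOpen U ∧ U.Nonempty ∧ Bornology.IsBounded U ∧
    DifferentiableOn ℂ F D ∧ F '' D = U ∧
    DifferentiableOn ℂ G U ∧ (∀ z ∈ D, G (F z) = z) ∧ (∀ w ∈ U, F (G w) = w)

/-- `D` has `N` linearly independent separating real hyperplanes. -/
def HasSeparatingHyperplanes {N : ℕ} (D : Set (Fin N → ℂ)) : Prop :=
  ∃ (L : Fin N → ((Fin N → ℂ) →ₗ[ℂ] ℂ)) (a : Fin N → ℝ),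
    LinearIndependent ℂ L ∧ ∀ z ∈ D, ∀ j, a j < ((L j) z).re

/-!
(1) ⇒ (2) is Liouville's theorem applied to `F ∘ f`, and (2) ⇒ (3) because a complex line is a
nonconstant entire curve. For (3) ⇒ (4), Hahn–Banach shows that a vector annihilated by every
complex functional whose real part is bounded below on `D` spans a complex line through any point
of `D`; so without lines these functionals span the dual space and contain a basis. For
(4) ⇒ (1), put `T = (L₁, …, Lₙ)`: coordinatewise inversion `z ↦ (T z - a + 1)⁻¹` maps `D` into the
closed unit polydisc, with inverse `w ↦ T⁻¹ (w⁻¹ + a - 1)`.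
-/

open Set Module Bornology

theorem Differentiable.apply_eq_apply_of_injOn_of_isBounded_image
    {E F : Type*} [NormedAddCommGroup E] [NormedSpace ℂ E]
    [NormedAddCommGroup F] [NormedSpace ℂ F] {D : Set E} {Φ : E → F}
    (hD : IsOpen D) (hΦ : DifferentiableOn ℂ Φ D) (hΦb : IsBounded (Φ '' D)) (hΦi : InjOn Φ D)
    {f : ℂ → E} (hf : Differentiable ℂ f) (hfD : ∀ ζ, f ζ ∈ D) (ζ ζ' : ℂ) : f ζ = f ζ' := by
  have hΦf : Differentiable ℂ (Φ ∘ f) := fun ζ =>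
    (hΦ.differentiableAt (hD.mem_nhds (hfD ζ))).comp ζ (hf ζ)
  have hΦfb : IsBounded (range (Φ ∘ f)) :=
    hΦb.subset (range_subset_iff.2 fun ζ => mem_image_of_mem Φ (hfD ζ))
  exact hΦi (hfD ζ) (hfD ζ') (hΦf.apply_eq_apply_of_bounded hΦfb ζ ζ')

theorem BiholToBounded.apply_eq_apply {N : ℕ} {D : Set (Fin N → ℂ)} (hD : IsOpen D)
    (h : BiholToBounded D) {f : ℂ → Fin N → ℂ} (hf : Differentiable ℂ f) (hfD : ∀ ζ, f ζ ∈ D)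
    (ζ ζ' : ℂ) : f ζ = f ζ' := by
  obtain ⟨U, F, G, -, -, hU, hF, rfl, -, hGF, -⟩ := h
  exact hf.apply_eq_apply_of_injOn_of_isBounded_image hD hF hU
    (LeftInvOn.injOn hGF) hfD ζ ζ'

theorem not_containsComplexLine_of_forall_entire_eq {E : Type*} [NormedAddCommGroup E]
    [NormedSpace ℂ E] {S : Set E}
    (h : ∀ f : ℂ → E, Differentiable ℂ f → (∀ ζ, f ζ ∈ S) → ∀ ζ ζ' : ℂ, f ζ = f ζ') :
    ¬ ContainsComplexLine S := by
  rintro ⟨p, v, hv, hline⟩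
  have hf : Differentiable ℂ (fun ζ : ℂ => p + ζ • v) :=
    (differentiable_id.smul_const v).const_add p
  have h01 := h _ hf hline 0 1
  rw [zero_smul, one_smul, add_zero, left_eq_add] at h01
  exact hv h01

def lowerBoundedDual {E : Type*} [AddCommGroup E] [Module ℂ E] (D : Set E) : Set (Dual ℂ E) :=
  {L | ∃ a : ℝ, ∀ z ∈ D, a < (L z).re}

theorem add_smul_mem_of_forall_lowerBoundedDual_apply_eq_zero {E : Type*}
    [NormedAddCommGroup E] [NormedSpace ℂ E] {D : Set E} (hDo : IsOpen D) (hDc : Convex ℝ D)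
    {p v : E} (hp : p ∈ D) (hv : ∀ L ∈ lowerBoundedDual D, L v = 0) (ζ : ℂ) :
    p + ζ • v ∈ D := by
  by_contra hq
  obtain ⟨f, hf⟩ := RCLike.geometric_hahn_banach_point_open (𝕜 := ℂ) hDc hDo hq
  have hfv : f v = 0 := hv f ⟨_, hf⟩
  have hfp := hf p hp
  rw [map_add, map_smul, hfv, smul_zero, add_zero] at hfp
  exact lt_irrefl _ hfp

theorem Submodule.span_eq_top_of_forall_dual_apply_eq_zero {K V : Type*} [Field K]
    [AddCommGroup V] [Module K V] [FiniteDimensional K V] {s : Set (Dual K V)}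
    (h : ∀ v : V, (∀ f ∈ s, f v = 0) → v = 0) : Submodule.span K s = ⊤ := by
  have hco : (Submodule.span K s).dualCoannihilator = ⊥ := eq_bot_iff.2 fun v hv =>
    h v (by rwa [← SetLike.mem_coe, Submodule.coe_dualCoannihilator_span] at hv)
  rw [← Subspace.dualCoannihilator_dualAnnihilator_eq (W := Submodule.span K s), hco,
    Submodule.dualAnnihilator_bot]

theorem span_lowerBoundedDual_eq_top {E : Type*} [NormedAddCommGroup E] [NormedSpace ℂ E]
    [FiniteDimensional ℂ E] {D : Set E} (hDo : IsOpen D) (hDc : Convex ℝ D) (hne : D.Nonempty)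
    (hD : ¬ ContainsComplexLine D) : Submodule.span ℂ (lowerBoundedDual D) = ⊤ := by
  obtain ⟨p, hp⟩ := hne
  refine Submodule.span_eq_top_of_forall_dual_apply_eq_zero fun v hv => ?_
  by_contra hv0
  exact hD ⟨p, v, hv0, add_smul_mem_of_forall_lowerBoundedDual_apply_eq_zero hDo hDc hp hv⟩

theorem exists_linearIndependent_fin_of_span_eq_top {K V : Type*} [Field K] [AddCommGroup V]
    [Module K V] [FiniteDimensional K V] {s : Set V} (hs : Submodule.span K s = ⊤) {n : ℕ}
    (hn : finrank K V = n) : ∃ b : Fin n → V, LinearIndependent K b ∧ ∀ i, b i ∈ s := by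
  let B := Basis.ofSpan hs.ge
  let B' := B.reindex (B.indexEquiv (finBasisOfFinrankEq K V hn))
  exact ⟨B', B'.linearIndependent,
    fun i => Basis.ofSpan_subset hs.ge ⟨_, (B.reindex_apply _ i).symm⟩⟩

theorem hasSeparatingHyperplanes_of_not_containsComplexLine {N : ℕ} {D : Set (Fin N → ℂ)}
    (hD : IsConvexDomain D) (h : ¬ ContainsComplexLine D) : HasSeparatingHyperplanes D := by
  obtain ⟨hDo, hDc, hne⟩ := hD
  obtain ⟨L, hLi, hLD⟩ := exists_linearIndependent_fin_of_span_eq_top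
    (span_lowerBoundedDual_eq_top hDo hDc hne h) (n := N) (by simp [Subspace.dual_finrank_eq])
  choose a ha using hLD
  exact ⟨L, a, hLi, fun z hz j => ha j z hz⟩

theorem LinearIndependent.bijective_pi_dual {K V ι : Type*} [Field K] [AddCommGroup V]
    [Module K V] [FiniteDimensional K V] [Fintype ι] {L : ι → Dual K V}
    (hL : LinearIndependent K L) (hcard : Fintype.card ι = finrank K V) :
    Function.Bijective (LinearMap.pi L) := by
  have hspan : Submodule.span K (range L) = ⊤ :=
    hL.span_eq_top_of_card_eq_finrank' (by rw [hcard, Subspace.dual_finrank_eq])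
  have hinj : Function.Injective (LinearMap.pi L) := by
    rw [← LinearMap.ker_eq_bot, eq_bot_iff]
    intro v hv
    have hv' : v ∈ (Submodule.span K (range L)).dualCoannihilator := by
      rw [← SetLike.mem_coe, Submodule.coe_dualCoannihilator_span]
      rintro _ ⟨j, rfl⟩
      exact congrFun (LinearMap.mem_ker.1 hv) j
    rwa [hspan, Submodule.dualCoannihilator_top] at hv'
  refine ⟨hinj, (LinearMap.injective_iff_surjective_of_finrank_eq_finrank ?_).1 hinj⟩
  simp [hcard]

theorem biholToBounded_of_leftInvOn {N : ℕ} {D O : Set (Fin N → ℂ)}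
    {F G : (Fin N → ℂ) → (Fin N → ℂ)} (hD : IsOpen D) (hne : D.Nonempty) (hO : IsOpen O)
    (hF : DifferentiableOn ℂ F D) (hFO : MapsTo F D O) (hFb : IsBounded (F '' D))
    (hG : DifferentiableOn ℂ G O) (hGF : LeftInvOn G F D) (hFG : LeftInvOn F G O) :
    BiholToBounded D := by
  have hU : F '' D = O ∩ G ⁻¹' D := by
    ext w
    constructor
    · rintro ⟨z, hz, rfl⟩
      exact ⟨hFO hz, by rw [mem_preimage, hGF hz]; exact hz⟩
    · rintro ⟨hwO, hwD⟩
      exact ⟨G w, hwD, hFG hwO⟩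
  refine ⟨F '' D, F, G, ?_, hne.image F, hFb, hF, rfl, hG.mono (hU ▸ inter_subset_left), hGF,
    fun w hw => hFG (hFO.image_subset hw)⟩
  rw [hU]
  exact hG.continuousOn.isOpen_inter_preimage hO hD

theorem differentiableOn_pi_inv {ι : Type*} [Fintype ι] :
    DifferentiableOn ℂ (fun w : ι → ℂ => w⁻¹) (univ.pi fun _ => {0}ᶜ) :=
  differentiableOn_pi.2 fun j =>
    ((differentiable_apply j).differentiableOn).inv fun _ hw => hw j (mem_univ j)

theorem norm_pi_inv_le_one {ι : Type*} [Fintype ι] {w : ι → ℂ} (hw : ∀ j, 1 ≤ (w j).re) :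
    ‖w⁻¹‖ ≤ 1 := by
  refine (pi_norm_le_iff_of_nonneg zero_le_one).2 fun j => ?_
  rw [Pi.inv_apply, norm_inv]
  exact inv_le_one_of_one_le₀ ((hw j).trans (Complex.re_le_norm _))

theorem biholToBounded_of_hasSeparatingHyperplanes {N : ℕ} {D : Set (Fin N → ℂ)}
    (hD : IsOpen D) (hne : D.Nonempty) (h : HasSeparatingHyperplanes D) : BiholToBounded D := by
  obtain ⟨L, a, hLi, hLD⟩ := h
  let T := (LinearEquiv.ofBijective _ (hLi.bijective_pi_dual (by simp))).toContinuousLinearEquiv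
  let c : Fin N → ℂ := fun j => (a j : ℂ) - 1
  have hre : ∀ z ∈ D, ∀ j, 1 ≤ ((T z - c) j).re := fun z hz j => by
    have := hLD z hz j
    simp only [T, c, LinearEquiv.coe_toContinuousLinearEquiv', LinearEquiv.ofBijective_apply,
      Pi.sub_apply, LinearMap.pi_apply, Complex.sub_re, Complex.ofReal_re, Complex.one_re]
    linarith
  have hne0 : ∀ z ∈ D, T z - c ∈ univ.pi fun _ => ({0}ᶜ : Set ℂ) := fun z hz j _ h0 => by
    have h1 := hre z hz j
    rw [h0, Complex.zero_re] at h1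
    norm_num at h1
  -- pointwise `⁻¹` is involutive also at `0`, so both inverse identities hold on all of `ℂ^N`
  refine biholToBounded_of_leftInvOn (F := fun z => (T z - c)⁻¹) (G := fun w => T.symm (w⁻¹ + c))
    hD hne (isOpen_set_pi finite_univ fun _ _ => isOpen_compl_singleton (x := 0)) ?_ ?_ ?_ ?_ ?_ ?_
  · exact differentiableOn_pi_inv.comp (T.differentiable.sub_const c).differentiableOn hne0
  · intro z hz j _
    exact inv_ne_zero (hne0 z hz j (mem_univ j))
  · refine (Metric.isBounded_closedBall (x := 0) (r := 1)).subset ?_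
    rintro _ ⟨z, hz, rfl⟩
    rw [Metric.mem_closedBall, dist_zero_right]
    exact norm_pi_inv_le_one (hre z hz)
  · exact T.symm.differentiable.comp_differentiableOn (differentiableOn_pi_inv.add_const c)
  · intro z _
    simp
  · intro w _
    simp

/-- conditions (1), (5), (6), (7) of Theorem 1.1:
for a convex domain `D ⊆ ℂ^N` the following are equivalent:
(1) `D` is biholomorphic to a bounded domain;
(2) every holomorphic map `ℂ → D` is constant;
(3) `D` contains no complex affine line;
(4) `D` has `N` linearly independent separating real hyperplanes. -/
theorem convex_domain_hyperbolicity_tfae {N : ℕ} (D : Set (Fin N → ℂ))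
    (hD : IsConvexDomain D) :
    List.TFAE
      [BiholToBounded D,
       ∀ f : ℂ → (Fin N → ℂ), Differentiable ℂ f → (∀ ζ, f ζ ∈ D) →
         ∀ ζ ζ' : ℂ, f ζ = f ζ',
       ¬ ContainsComplexLine D,
       HasSeparatingHyperplanes D] := by
  tfae_have 1 → 2 := fun h _ hf hfD => h.apply_eq_apply hD.1 hf hfD
  tfae_have 2 → 3 := not_containsComplexLine_of_forall_entire_eq
  tfae_have 3 → 4 := hasSeparatingHyperplanes_of_not_containsComplexLine hD
  tfae_have 4 → 1 := biholToBounded_of_hasSeparatingHyperplanes hD.1 hD.2.2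
  tfae_finish
end

section
/- Let L_1, …, L_N : ℂ^N → ℂ be ℂ-linearly independent complex linear functionals, let a_1, …, a_N ∈ ℝ, and let D ⊆ ℂ^N be a nonempty open set with D ⊆ {z : Re L_j(z) > a_j for all j = 1, …, N}. Then the map F(z) = (1/(L_1(z) − a_1 + 1), …, 1/(L_N(z) − a_N + 1)) is holomorphic and injective on D, its image F(D) is a bounded open subset of ℂ^N, and the inverse map F(D) → D is holomorphic. In particular, D is biholomorphic to a bounded domain. -/
/-- The Cayley-type map `F(z) = (1/(L₁(z) - a₁ + 1), …, 1/(L_N(z) - a_N + 1))`. -/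
noncomputable def cayleyMap {N : ℕ} (L : Fin N → ((Fin N → ℂ) →ₗ[ℂ] ℂ)) (a : Fin N → ℝ)
    (z : Fin N → ℂ) : Fin N → ℂ :=
  fun j => 1 / ((L j) z - (a j : ℂ) + 1)

/-- implication (7) ⇒ (1) in Proposition 3.6: if `L₁, …, L_N` are
linearly independent linear functionals, `a₁, …, a_N ∈ ℝ`, and `D` is a nonempty open
set with `Re Lⱼ > aⱼ` on `D` for all `j`, then `F(z) = (1/(Lⱼ(z) - aⱼ + 1))ⱼ` is
holomorphic and injective on `D`, its image is bounded and open, the inverse is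
holomorphic, and hence `D` is biholomorphic to a bounded domain. -/
theorem cayleyMap_bihol_to_bounded {N : ℕ} (L : Fin N → ((Fin N → ℂ) →ₗ[ℂ] ℂ))
    (hL : LinearIndependent ℂ L) (a : Fin N → ℝ) (D : Set (Fin N → ℂ))
    (hne : D.Nonempty) (hop : IsOpen D)
    (hsep : ∀ z ∈ D, ∀ j, a j < ((L j) z).re) :
    DifferentiableOn ℂ (cayleyMap L a) D ∧
    Set.InjOn (cayleyMap L a) D ∧
    IsOpen (cayleyMap L a '' D) ∧
    Bornology.IsBounded (cayleyMap L a '' D) ∧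
    (∃ G : (Fin N → ℂ) → (Fin N → ℂ),
      DifferentiableOn ℂ G (cayleyMap L a '' D) ∧ ∀ z ∈ D, G (cayleyMap L a z) = z) ∧
    BiholToBounded D := by
  classical
  set T : (Fin N → ℂ) →ₗ[ℂ] (Fin N → ℂ) := LinearMap.pi L with hT
  have hspan : Submodule.span ℂ (Set.range L) = ⊤ :=
    hL.span_eq_top_of_card_eq_finrank' (by simp [Subspace.dual_finrank_eq])
  have hTinj : Function.Injective T := by
    rw [← LinearMap.ker_eq_bot, LinearMap.ker_eq_bot']
    intro z hz
    have hall : ∀ φ : Module.Dual ℂ (Fin N → ℂ), φ z = 0 := by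
      intro φ
      have hmem : φ ∈ Submodule.span ℂ (Set.range L) := hspan ▸ Submodule.mem_top
      induction hmem using Submodule.span_induction with
      | mem x hx => obtain ⟨j, rfl⟩ := hx; exact congrFun hz j
      | zero => simp
      | add x y _ _ hx hy => simp [hx, hy]
      | smul c x _ hx => simp [hx]
    exact (Module.forall_dual_apply_eq_zero_iff ℂ z).mp hall
  let E : (Fin N → ℂ) ≃ₗ[ℂ] (Fin N → ℂ) :=
    LinearEquiv.ofBijective T ⟨hTinj, LinearMap.injective_iff_surjective.mp hTinj⟩
  have hE : ∀ z j, E z j = L j z := fun z j => rfl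
  -- denominators
  have hre : ∀ z ∈ D, ∀ j, (1:ℝ) < ((L j) z - (a j : ℂ) + 1).re := by
    intro z hz j
    simp only [Complex.add_re, Complex.sub_re, Complex.ofReal_re, Complex.one_re]
    linarith [hsep z hz j]
  have hden : ∀ z ∈ D, ∀ j, (L j) z - (a j : ℂ) + 1 ≠ 0 := by
    intro z hz j h
    have := hre z hz j
    rw [h] at this; simp at this; linarith
  -- F differentiable
  have hLd : ∀ j, Differentiable ℂ (fun z : Fin N → ℂ => (L j) z) := fun j =>
    (LinearMap.toContinuousLinearMap (L j)).differentiable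
  have hFd : DifferentiableOn ℂ (cayleyMap L a) D := by
    rw [differentiableOn_pi]
    intro j
    simp only [cayleyMap, one_div]
    exact DifferentiableOn.inv ((((hLd j).sub_const _).add_const _).differentiableOn)
      (fun z hz => hden z hz j)
  -- inverse
  set G : (Fin N → ℂ) → (Fin N → ℂ) :=
    fun w => E.symm (fun j => 1 / w j + (a j : ℂ) - 1) with hG
  have hGF : ∀ z ∈ D, G (cayleyMap L a z) = z := by
    intro z hz
    have : (fun j => 1 / cayleyMap L a z j + (a j : ℂ) - 1) = E z := by
      funext j
      rw [hE]
      simp only [cayleyMap, one_div_one_div]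
      ring
    rw [hG]; simp only [this, LinearEquiv.symm_apply_apply]
  -- the set S
  set V : Set (Fin N → ℂ) := {w | ∀ j, w j ≠ 0} with hV
  have hVop : IsOpen V := by
    have : V = ⋂ j, (fun w : Fin N → ℂ => w j) ⁻¹' {0}ᶜ := by
      ext w; simp [hV]
    rw [this]
    exact isOpen_iInter_of_finite fun j =>
      (isOpen_compl_singleton).preimage (continuous_apply j)
  have hGdV : DifferentiableOn ℂ G V := by
    have h1 : DifferentiableOn ℂ (fun w : Fin N → ℂ => (fun j => 1 / w j + (a j : ℂ) - 1)) V := by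
      rw [differentiableOn_pi]
      intro j
      have heval : DifferentiableOn ℂ (fun w : Fin N → ℂ => w j) V :=
        (differentiable_apply j).differentiableOn
      have hnz : ∀ w ∈ V, w j ≠ 0 := fun w hw => hw j
      simp only [one_div]
      exact ((heval.inv hnz).add_const _).sub_const _
    exact ((E.symm : (Fin N → ℂ) →ₗ[ℂ] (Fin N → ℂ)).toContinuousLinearMap.differentiable).comp_differentiableOn h1
  have hFG : ∀ w ∈ V ∩ G ⁻¹' D, cayleyMap L a (G w) = w := by
    intro w ⟨hw1, hw2⟩
    funext j
    have : (L j) (G w) = 1 / w j + (a j : ℂ) - 1 := by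
      rw [← hE, hG]; simp only [LinearEquiv.apply_symm_apply]
    simp only [cayleyMap, this]
    rw [show 1 / w j + (a j : ℂ) - 1 - (a j : ℂ) + 1 = 1 / w j by ring, one_div_one_div]
  have himg : cayleyMap L a '' D = V ∩ G ⁻¹' D := by
    ext w
    constructor
    · rintro ⟨z, hz, rfl⟩
      refine ⟨fun j => ?_, ?_⟩
      · exact one_div_ne_zero (hden z hz j)
      · simp only [Set.mem_preimage, hGF z hz]; exact hz
    · intro hw
      exact ⟨G w, hw.2, hFG w hw⟩
  have hSop : IsOpen (V ∩ G ⁻¹' D) :=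
    hGdV.continuousOn.isOpen_inter_preimage hVop hop
  -- bounded
  have hbd : Bornology.IsBounded (cayleyMap L a '' D) := by
    rw [isBounded_iff_forall_norm_le]
    refine ⟨1, ?_⟩
    rintro w ⟨z, hz, rfl⟩
    rw [pi_norm_le_iff_of_nonneg zero_le_one]
    intro j
    have h1 : (1:ℝ) < ‖(L j) z - (a j : ℂ) + 1‖ :=
      lt_of_lt_of_le (hre z hz j) (Complex.re_le_norm _)
    simp only [cayleyMap, norm_div, norm_one]
    rw [div_le_one (by linarith)]
    linarith
  have hinj : Set.InjOn (cayleyMap L a) D := by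
    intro x hx y hy hxy
    have := hGF x hx
    rw [hxy, hGF y hy] at this
    exact this.symm
  refine ⟨hFd, hinj, himg ▸ hSop, hbd, ⟨G, himg ▸ hGdV.mono Set.inter_subset_left,
    hGF⟩, cayleyMap L a '' D, cayleyMap L a, G, himg ▸ hSop, hne.image _, hbd, hFd, rfl,
    himg ▸ hGdV.mono Set.inter_subset_left, hGF, ?_⟩
  rintro w hw
  exact hFG w (himg ▸ hw)
end

section
/- Let D ⊆ ℂ^N be a convex domain containing no complex affine line. Then for every m ≥ 1, every holomorphic map f : ℂ^m → ℂ^N with f(ℂ^m) ⊆ D is constant. -/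
/-!
If `f z ≠ f w`, the complex line through these two values leaves `D`, so Hahn–Banach gives a
complex linear functional `L` whose real part is bounded above on `D` and which is not
constant along that line, i.e. `L (f z) ≠ L (f w)`. But `L ∘ f` is an entire function with
real part bounded above, hence constant by Liouville's theorem.
-/

open Complex Set Bornology

variable {E F : Type*} [NormedAddCommGroup E] [NormedSpace ℂ E]
  [NormedAddCommGroup F] [NormedSpace ℂ F]

theorem Differentiable.apply_eq_apply_of_re_le {f : E → ℂ} (hf : Differentiable ℂ f) {c : ℝ}
    (hc : ∀ z, (f z).re ≤ c) (z w : E) : f z = f w := by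
  -- Pass to the bounded entire function `(f - (c + 1))⁻¹`.
  have hre : ∀ z, (f z - (c + 1)).re ≤ -1 := fun z => by simpa using hc z
  have hnorm : ∀ z, 1 ≤ ‖f z - (c + 1)‖ := fun z => by
    linarith [neg_le_abs (f z - (c + 1)).re, abs_re_le_norm (f z - (c + 1)), hre z]
  have hne : ∀ z, f z - (c + 1) ≠ 0 := fun z => norm_pos_iff.1 (one_pos.trans_le (hnorm z))
  have hg : Differentiable ℂ fun z => (f z - (c + 1))⁻¹ := (hf.sub_const _).inv hne
  have hb : IsBounded (range fun z => (f z - (c + 1))⁻¹) := by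
    refine isBounded_iff_forall_norm_le.2 ⟨1, ?_⟩
    rintro _ ⟨z, rfl⟩
    rw [norm_inv]
    exact inv_le_one_of_one_le₀ (hnorm z)
  simpa using hg.apply_eq_apply_of_bounded hb z w

theorem Convex.exists_strongDual_re_lt_ne_of_not_containsComplexLine {D : Set F}
    (hDc : Convex ℝ D) (hDo : IsOpen D) (hline : ¬ ContainsComplexLine D) {p p' : F}
    (hp : p ∈ D) (hne : p ≠ p') :
    ∃ (L : StrongDual ℂ F) (c : ℝ), (∀ x ∈ D, (L x).re < c) ∧ L p ≠ L p' := by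
  obtain ⟨ζ, hζ⟩ : ∃ ζ : ℂ, p + ζ • (p' - p) ∉ D := by
    by_contra! h
    exact hline ⟨p, p' - p, sub_ne_zero.2 hne.symm, h⟩
  obtain ⟨L, hL⟩ := RCLike.geometric_hahn_banach_open_point (𝕜 := ℂ) hDc hDo hζ
  refine ⟨L, _, hL, fun hLp => ?_⟩
  have hLq : L (p + ζ • (p' - p)) = L p := by simp [hLp]
  exact (hL p hp).ne (by rw [hLq])

theorem Differentiable.apply_eq_apply_of_forall_mem_convex_of_not_containsComplexLine
    {D : Set F} (hDc : Convex ℝ D) (hDo : IsOpen D) (hline : ¬ ContainsComplexLine D)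
    {f : E → F} (hf : Differentiable ℂ f) (hfD : ∀ z, f z ∈ D) (z w : E) : f z = f w := by
  by_contra hne
  obtain ⟨L, c, hL, hLne⟩ :=
    hDc.exists_strongDual_re_lt_ne_of_not_containsComplexLine hDo hline (hfD z) hne
  exact hLne <| (L.differentiable.comp hf).apply_eq_apply_of_re_le (fun x => (hL _ (hfD x)).le) z w

/-- implication (6) ⇒ (5) of Theorem 1.1, in several variables:
if `D ⊆ ℂ^N` is a convex domain containing no complex affine line, then for every
`m ≥ 1`, every holomorphic map `f : ℂ^m → ℂ^N` with image in `D` is constant. -/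
theorem entire_maps_constant {N : ℕ} (D : Set (Fin N → ℂ)) (hD : IsConvexDomain D)
    (hline : ¬ ContainsComplexLine D) :
    ∀ m : ℕ, 1 ≤ m → ∀ f : (Fin m → ℂ) → (Fin N → ℂ), Differentiable ℂ f →
      (∀ z, f z ∈ D) → ∀ z z' : Fin m → ℂ, f z = f z' := fun _ _ _ hf hfD =>
  hf.apply_eq_apply_of_forall_mem_convex_of_not_containsComplexLine hD.2.1 hD.1 hline hfD
end

section
/- Let D ⊆ ℂ^N be a convex domain that contains a complex affine line. Then for every boundary point p ∈ ∂D there exists a complex affine line through p entirely contained in ∂D. Equivalently (contrapositive): if there exists p ∈ ∂D such that no complex affine line through p is contained in ∂D, then D contains no complex affine line, and hence D is biholomorphic to a bounded domain. -/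
/-!
If an open convex set contains the line `p + ℂv`, then for every `x` in it the points
`x + tv` are limits of the convex combinations `(1 - ε)x + ε(p + (t/ε)v)`; as the midpoint of
`x` and the limit point `x + 2tv`, the point `x + tv` lies in the set itself. So the set is
invariant under translation by `ℂv`, and so is its frontier.

If `D` contains no complex line, Hahn–Banach gives, for every `v ≠ 0`, a complex functional `f`
with `Re f` bounded above on `D` and `f v ≠ 0`. Such functionals span the dual, so `N` of them
form a linear isomorphism `L` under which `D` lies in a product of half-planes
`Re wⱼ ≤ cⱼ`; the coordinatewise inversion `wⱼ ↦ (wⱼ - cⱼ - 1)⁻¹` then maps `L(D)`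
biholomorphically onto a subset of the unit polydisc.
-/

open Set Filter Topology Module

section LineInConvexSet

variable {E : Type*} [AddCommGroup E] [Module ℝ E] [TopologicalSpace E] [IsTopologicalAddGroup E]
  [ContinuousSMul ℝ E] {s : Set E} {p v x : E}

theorem Convex.add_smul_mem_closure_of_line (hs : Convex ℝ s) (hline : ∀ t : ℝ, p + t • v ∈ s)
    (hx : x ∈ s) (t : ℝ) : x + t • v ∈ closure s := by
  have hlim : Tendsto (fun ε : ℝ ↦ (1 - ε) • x + ε • p + t • v) (𝓝[>] 0) (𝓝 (x + t • v)) := by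
    refine tendsto_nhdsWithin_of_tendsto_nhds (Continuous.tendsto' (by fun_prop) _ _ ?_)
    simp
  refine mem_closure_of_tendsto hlim ?_
  filter_upwards [Ioo_mem_nhdsGT one_pos] with ε ⟨hε₀, hε₁⟩
  have hcombo : (1 - ε) • x + ε • (p + (ε⁻¹ * t) • v) = (1 - ε) • x + ε • p + t • v := by
    rw [smul_add, smul_smul, mul_inv_cancel_left₀ hε₀.ne', add_assoc]
  exact hcombo ▸ hs hx (hline _) (by linarith) hε₀.le (by ring)

theorem Convex.add_smul_mem_interior_of_line (hs : Convex ℝ s) (hline : ∀ t : ℝ, p + t • v ∈ s)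
    (hx : x ∈ interior s) (t : ℝ) : x + t • v ∈ interior s := by
  have hcombo : (1 / 2 : ℝ) • x + (1 / 2 : ℝ) • (x + (2 * t) • v) = x + t • v := by module
  exact hcombo ▸ hs.combo_interior_closure_mem_interior hx
    (hs.add_smul_mem_closure_of_line hline (interior_subset hx) _) one_half_pos
    one_half_pos.le (by norm_num)

theorem IsOpen.preimage_add_smul_of_line (hso : IsOpen s) (hs : Convex ℝ s)
    (hline : ∀ t : ℝ, p + t • v ∈ s) (t : ℝ) : (· + t • v) ⁻¹' s = s := by
  have hmem : ∀ y ∈ s, ∀ t : ℝ, y + t • v ∈ s := fun y hy t ↦ by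
    simpa only [hso.interior_eq] using
      hs.add_smul_mem_interior_of_line hline (hso.interior_eq.symm ▸ hy) t
  ext y
  refine ⟨fun hy ↦ ?_, fun hy ↦ hmem y hy t⟩
  simpa using hmem _ hy (-t)

theorem IsOpen.add_smul_mem_frontier_of_line (hso : IsOpen s) (hs : Convex ℝ s)
    (hline : ∀ t : ℝ, p + t • v ∈ s) (hx : x ∈ frontier s) (t : ℝ) :
    x + t • v ∈ frontier s := by
  have := (Homeomorph.addRight (t • v)).preimage_frontier s
  rw [Homeomorph.coe_addRight, hso.preimage_add_smul_of_line hs hline] at this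
  change x ∈ (· + t • v) ⁻¹' frontier s
  rwa [this]

theorem IsOpen.add_smul_mem_frontier_of_complex_line [Module ℂ E] [IsScalarTower ℝ ℂ E]
    (hso : IsOpen s) (hs : Convex ℝ s) (hline : ∀ ζ : ℂ, p + ζ • v ∈ s) (hx : x ∈ frontier s)
    (ζ : ℂ) : x + ζ • v ∈ frontier s := by
  have hreal : ∀ t : ℝ, p + t • (ζ • v) ∈ s := fun t ↦ by
    simpa [← smul_assoc] using hline (t * ζ)
  simpa using hso.add_smul_mem_frontier_of_line hs hreal hx 1

end LineInConvexSet

theorem Submodule.span_eq_top_of_separating {K V : Type*} [Field K] [AddCommGroup V] [Module K V]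
    [FiniteDimensional K V] {C : Set (Dual K V)} (hC : ∀ v : V, v ≠ 0 → ∃ f ∈ C, f v ≠ 0) :
    span K C = ⊤ := by
  have hcoann : (span K C).dualCoannihilator = ⊥ := by
    refine eq_bot_iff.2 fun v hv ↦ by_contra fun hv0 ↦ ?_
    obtain ⟨f, hfC, hfv⟩ := hC v hv0
    exact hfv ((mem_dualCoannihilator v).1 hv f (subset_span hfC))
  rw [← Subspace.dualCoannihilator_dualAnnihilator_eq (W := span K C), hcoann,
    dualAnnihilator_bot]

theorem exists_injective_pi_of_separating {K V ι : Type*} [Field K] [AddCommGroup V] [Module K V]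
    [Finite ι] (b : Basis ι K V) {C : Set (Dual K V)}
    (hC : ∀ v : V, v ≠ 0 → ∃ f ∈ C, f v ≠ 0) :
    ∃ f : ι → Dual K V, (∀ i, f i ∈ C) ∧ Function.Injective (LinearMap.pi f) := by
  classical
  have : FiniteDimensional K V := b.finiteDimensional_of_finite
  let B := Basis.ofSpan (Submodule.span_eq_top_of_separating hC).ge
  let e := B.indexEquiv b.dualBasis
  refine ⟨fun i ↦ B (e.symm i), fun i ↦ Basis.ofSpan_subset _ (mem_range_self _), ?_⟩
  refine (LinearMap.ker_eq_bot'.2 fun z hz ↦ ?_) |> LinearMap.ker_eq_bot.1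
  have heval : Dual.eval K V z = 0 := B.ext fun j ↦ by
    simpa using congrFun hz (e j)
  exact (forall_dual_apply_eq_zero_iff K z).1 fun φ ↦ LinearMap.congr_fun heval φ

theorem exists_bddAbove_re_apply_ne_zero {E : Type*} [AddCommGroup E] [Module ℂ E] [Module ℝ E]
    [IsScalarTower ℝ ℂ E] [TopologicalSpace E] [IsTopologicalAddGroup E] [ContinuousSMul ℂ E]
    {s : Set E} (hso : IsOpen s) (hs : Convex ℝ s) (hne : s.Nonempty)
    (hnl : ¬ ContainsComplexLine s) {v : E} (hv : v ≠ 0) :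
    ∃ f : StrongDual ℂ E, BddAbove ((fun z ↦ (f z).re) '' s) ∧ f v ≠ 0 := by
  obtain ⟨p, hp⟩ := hne
  obtain ⟨ζ, hζ⟩ : ∃ ζ : ℂ, p + ζ • v ∉ s := by
    by_contra! h
    exact hnl ⟨p, v, hv, h⟩
  obtain ⟨f, hf⟩ := RCLike.geometric_hahn_banach_open_point (𝕜 := ℂ) hs hso hζ
  refine ⟨f, ⟨_, forall_mem_image.2 fun z hz ↦ (hf z hz).le⟩, fun hfv ↦ ?_⟩
  simpa [hfv] using hf p hp

theorem Complex.one_le_norm_sub_of_re_add_one_le {z w : ℂ} (h : z.re + 1 ≤ w.re) :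
    1 ≤ ‖z - w‖ :=
  calc (1 : ℝ) ≤ |(z - w).re| := by rw [Complex.sub_re, abs_sub_comm, abs_of_pos] <;> linarith
    _ ≤ ‖z - w‖ := Complex.abs_re_le_norm _

theorem biholToBounded_of_re_le {N : ℕ} {D : Set (Fin N → ℂ)} (hD : IsOpen D) (hne : D.Nonempty)
    (c : Fin N → ℝ) (hc : ∀ z ∈ D, ∀ j, (z j).re ≤ c j) : BiholToBounded D := by
  let a : Fin N → ℂ := fun j ↦ ((c j + 1 : ℝ) : ℂ)
  let F : (Fin N → ℂ) → (Fin N → ℂ) := fun z j ↦ (z j - a j)⁻¹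
  let G : (Fin N → ℂ) → (Fin N → ℂ) := fun w j ↦ (w j)⁻¹ + a j
  -- `inv_inv` needs no hypothesis (`0⁻¹ = 0`), so `F` and `G` are inverse on all of `ℂ^N`.
  have hGF : ∀ z, G (F z) = z := fun z ↦ by simp [F, G]
  have hFG : ∀ w, F (G w) = w := fun w ↦ by simp [F, G]
  have hdist : ∀ z ∈ D, ∀ j, 1 ≤ ‖z j - a j‖ := fun z hz j ↦
    Complex.one_le_norm_sub_of_re_add_one_le (by simp [a, hc z hz j])
  have hsub : ∀ z ∈ D, ∀ j, z j - a j ≠ 0 := fun z hz j ↦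
    norm_pos_iff.1 (one_pos.trans_le (hdist z hz j))
  have himage : F '' D = G ⁻¹' D := by
    ext w
    exact ⟨by rintro ⟨z, hz, rfl⟩; rwa [mem_preimage, hGF], fun hw ↦ ⟨G w, hw, hFG w⟩⟩
  let W : Set (Fin N → ℂ) := univ.pi fun _ ↦ {0}ᶜ
  have hGD : G ⁻¹' D ⊆ W := fun w hw j _ ↦ by
    simpa [G] using hsub _ hw j
  have hGcont : ContinuousOn G W := continuousOn_pi.2 fun j ↦
    ((continuous_apply j).continuousOn.inv₀ fun w (hw : w ∈ W) ↦ hw j (mem_univ j)).add_const _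
  refine ⟨F '' D, F, G, ?_, hne.image F, ?_, ?_, rfl, ?_, fun z _ ↦ hGF z, fun w _ ↦ hFG w⟩
  · rw [himage, ← inter_eq_self_of_subset_right hGD]
    exact hGcont.isOpen_inter_preimage
      (isOpen_set_pi finite_univ fun _ _ ↦ isOpen_compl_singleton) hD
  · refine (Metric.isBounded_closedBall (x := 0) (r := 1)).subset ?_
    rintro _ ⟨z, hz, rfl⟩
    rw [mem_closedBall_zero_iff, pi_norm_le_iff_of_nonneg zero_le_one]
    exact fun j ↦ (norm_inv _).trans_le (inv_le_one_of_one_le₀ (hdist z hz j))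
  · exact differentiableOn_pi.2 fun j ↦
      ((differentiable_apply j).differentiableOn.sub_const _).inv fun z hz ↦ hsub z hz j
  · refine (differentiableOn_pi.2 fun j ↦ ?_).mono (himage ▸ hGD)
    exact ((differentiable_apply j).differentiableOn.inv
      fun w (hw : w ∈ W) ↦ hw j (mem_univ j)).add_const _

theorem BiholToBounded.preimage_continuousLinearEquiv {N : ℕ} {D : Set (Fin N → ℂ)}
    (hD : BiholToBounded D) (L : (Fin N → ℂ) ≃L[ℂ] (Fin N → ℂ)) : BiholToBounded (L ⁻¹' D) := by
  obtain ⟨U, F, G, hUo, hUne, hUb, hF, hFD, hG, hGF, hFG⟩ := hD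
  refine ⟨U, F ∘ L, L.symm ∘ G, hUo, hUne, hUb, hF.comp L.differentiableOn (mapsTo_preimage _ _),
    ?_, L.symm.differentiable.comp_differentiableOn hG, fun z hz ↦ ?_, fun w hw ↦ ?_⟩
  · rw [image_comp, L.surjective.image_preimage, hFD]
  · simp [hGF _ hz]
  · simp [hFG _ hw]

theorem biholToBounded_of_injective_pi {N : ℕ} {D : Set (Fin N → ℂ)} (hD : IsOpen D)
    (hne : D.Nonempty) (f : Fin N → Dual ℂ (Fin N → ℂ)) (hf : Function.Injective (LinearMap.pi f))
    (hbdd : ∀ j, BddAbove ((fun z ↦ (f j z).re) '' D)) : BiholToBounded D := by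
  choose c hc using hbdd
  let L := (LinearEquiv.ofInjectiveEndo _ hf).toContinuousLinearEquiv
  rw [← L.injective.preimage_image D]
  have hLD : ∀ w ∈ L '' D, ∀ j, (w j).re ≤ c j := by
    rintro _ ⟨z, hz, rfl⟩ j
    exact hc j (mem_image_of_mem _ hz)
  exact .preimage_continuousLinearEquiv
    (biholToBounded_of_re_le (L.isOpenMap D hD) (hne.image L) c hLD) L

/-- geometric content of Corollary 4.1: if a convex domain `D ⊆ ℂ^N`
contains a complex affine line, then through every boundary point of `D` there passes a
complex affine line entirely contained in `∂D`. Contrapositively: if some `p ∈ ∂D` has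
no complex affine line through it contained in `∂D`, then `D` contains no complex affine
line, and hence `D` is biholomorphic to a bounded domain. -/
theorem line_through_every_boundary_point {N : ℕ} (D : Set (Fin N → ℂ))
    (hD : IsConvexDomain D) :
    (ContainsComplexLine D →
      ∀ p ∈ frontier D, ∃ v : Fin N → ℂ, v ≠ 0 ∧ ∀ ζ : ℂ, p + ζ • v ∈ frontier D) ∧
    ((∃ p ∈ frontier D, ¬ ∃ v : Fin N → ℂ, v ≠ 0 ∧ ∀ ζ : ℂ, p + ζ • v ∈ frontier D) →
      ¬ ContainsComplexLine D ∧ BiholToBounded D) := by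
  obtain ⟨hso, hs, hne⟩ := hD
  have hline_frontier : ContainsComplexLine D →
      ∀ p ∈ frontier D, ∃ v : Fin N → ℂ, v ≠ 0 ∧ ∀ ζ : ℂ, p + ζ • v ∈ frontier D :=
    fun ⟨_, v, hv, hline⟩ p hp ↦ ⟨v, hv, hso.add_smul_mem_frontier_of_complex_line hs hline hp⟩
  refine ⟨hline_frontier, fun ⟨p, hp, hp_no_line⟩ ↦ ?_⟩
  have hnl : ¬ ContainsComplexLine D := fun h ↦ hp_no_line (hline_frontier h p hp)
  obtain ⟨f, hfC, hf⟩ := exists_injective_pi_of_separating (Pi.basisFun ℂ (Fin N))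
    (C := {f | BddAbove ((fun z ↦ (f z).re) '' D)}) fun v hv ↦ by
      obtain ⟨f, hbdd, hfv⟩ := exists_bddAbove_re_apply_ne_zero hso hs hne hnl hv
      exact ⟨f.toLinearMap, hbdd, hfv⟩
  exact ⟨hnl, biholToBounded_of_injective_pi hso hne f hf hfC⟩
end

section
/- Let D ⊆ ℂ^N be a convex domain that contains a complex affine line. Then there exists a holomorphic map f : D → D with no fixed point (f(z) ≠ z for all z ∈ D) but possessing a 2-periodic point (there is z_0 ∈ D with f(f(z_0)) = z_0); in particular, the sequence of iterates {f^{∘k}} is not compactly divergent although f has no fixed point. -/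
/-!
Translating along the line `p + ℂ v ⊆ D` preserves the open convex set `D`, so
`f z = z + exp (ℓ z) • v`, with `ℓ` a linear functional such that `ℓ v = 1`, maps `D` into
itself and has no fixed point since `exp` never vanishes. A point `z₀` of the line with
`exp (ℓ z₀) = π i` is moved by `π i • v`, and then back by `-π i • v` because
`exp (ℓ z₀ + π i) = -π i`; a periodic point alone prevents compact divergence.
-/

open Complex Function Set Topology
open scoped Real

section Recession

variable {E : Type*} [AddCommGroup E] [TopologicalSpace E] [IsTopologicalAddGroup E]
  [Module ℝ E] [ContinuousSMul ℝ E]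

theorem IsOpen.add_smul_mem_of_convex_of_forall_add_smul_mem {S : Set E} (hopen : IsOpen S)
    (hconv : Convex ℝ S) {p v : E} (hline : ∀ t : ℝ, p + t • v ∈ S) {z : E} (hz : z ∈ S)
    (t : ℝ) : z + t • v ∈ S := by
  have hnear : ∀ᶠ ε : ℝ in 𝓝[>] 0, z + ε • (z - p) ∈ S := by
    refine nhdsWithin_le_nhds (Continuous.tendsto' ?_ 0 z (by simp) |>.eventually
      (hopen.mem_nhds hz))
    fun_prop
  obtain ⟨ε, hzε, hε : 0 < ε⟩ := (hnear.and self_mem_nhdsWithin).exists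
  -- `z + t • v` is the convex combination of `z + ε • (z - p)` and a point of the line
  -- with weights `1 / (1 + ε)` and `ε / (1 + ε)`, which cancels the `p` terms.
  have hcombo := hconv hzε (hline ((1 + ε) / ε * t)) (a := 1 / (1 + ε)) (b := ε / (1 + ε))
    (by positivity) (by positivity) (by field_simp)
  convert hcombo using 1
  match_scalars <;> field_simp
  ring

variable [Module ℂ E] [IsScalarTower ℝ ℂ E]

theorem IsOpen.add_smul_mem_of_convex_of_complex_line {S : Set E} (hopen : IsOpen S)
    (hconv : Convex ℝ S) {p v : E} (hline : ∀ ζ : ℂ, p + ζ • v ∈ S) {z : E} (hz : z ∈ S)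
    (ζ : ℂ) : z + ζ • v ∈ S := by
  simpa using hopen.add_smul_mem_of_convex_of_forall_add_smul_mem hconv
    (fun t : ℝ => by simpa only [smul_assoc] using hline (t • ζ)) hz 1

end Recession

section ExpShift

variable {E : Type*} [NormedAddCommGroup E] [NormedSpace ℂ E]

noncomputable def expShift (ℓ : E →L[ℂ] ℂ) (v z : E) : E :=
  z + exp (ℓ z) • v

theorem differentiable_expShift (ℓ : E →L[ℂ] ℂ) (v : E) : Differentiable ℂ (expShift ℓ v) := by
  unfold expShift
  fun_prop

theorem expShift_ne_self (ℓ : E →L[ℂ] ℂ) {v : E} (hv : v ≠ 0) (z : E) : expShift ℓ v z ≠ z := by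
  simp [expShift, exp_ne_zero, hv]

theorem mapsTo_expShift {S : Set E} (ℓ : E →L[ℂ] ℂ) {v : E}
    (hS : ∀ z ∈ S, ∀ ζ : ℂ, z + ζ • v ∈ S) : MapsTo (expShift ℓ v) S S :=
  fun z hz => hS z hz _

theorem isPeriodicPt_expShift_two {ℓ : E →L[ℂ] ℂ} {v z : E} (hℓv : ℓ v = 1)
    (hz : exp (ℓ z) = π * I) : IsPeriodicPt (expShift ℓ v) 2 z := by
  have hshift : exp (ℓ (expShift ℓ v z)) = -(π * I) := by
    simp [expShift, hℓv, hz, exp_add, exp_pi_mul_I]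
  change expShift ℓ v (expShift ℓ v z) = z
  rw [expShift, hshift, expShift, hz]
  module

theorem exists_isPeriodicPt_expShift_two_on_line {ℓ : E →L[ℂ] ℂ} {v : E} (hℓv : ℓ v = 1)
    (p : E) : ∃ ζ : ℂ, IsPeriodicPt (expShift ℓ v) 2 (p + ζ • v) := by
  refine ⟨log (π * I) - ℓ p, isPeriodicPt_expShift_two hℓv ?_⟩
  simp [hℓv, exp_log, Real.pi_ne_zero, I_ne_zero]

end ExpShift

theorem not_finite_setOf_iterate_image_inter_nonempty {X : Type*} {f : X → X} {n : ℕ}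
    {x : X} (hx : IsPeriodicPt f n x) (hn : 0 < n) :
    ¬ {k : ℕ | ((f^[k]) '' {x} ∩ {x}).Nonempty}.Finite := by
  refine infinite_of_injective_forall_mem (f := (n * ·)) (mul_right_injective₀ hn.ne') ?_
  intro m
  simp [(hx.mul_const m).eq]

/-- implication (11) ⇒ (4) of Theorem 1.1: if a convex domain
`D ⊆ ℂ^N` contains a complex affine line, then there is a holomorphic self-map `f` of
`D` with no fixed point but with a 2-periodic point; in particular the sequence of
iterates `{f^∘k}` is not compactly divergent although `f` has no fixed point. -/
theorem fixed_point_free_not_compactly_divergent {N : ℕ} (D : Set (Fin N → ℂ))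
    (hD : IsConvexDomain D) (hline : ContainsComplexLine D) :
    ∃ f : (Fin N → ℂ) → (Fin N → ℂ),
      DifferentiableOn ℂ f D ∧ Set.MapsTo f D D ∧
      (∀ z ∈ D, f z ≠ z) ∧
      (∃ z₀ ∈ D, f (f z₀) = z₀) ∧
      ¬ (∀ K₁ K₂ : Set (Fin N → ℂ), K₁ ⊆ D → K₂ ⊆ D → IsCompact K₁ → IsCompact K₂ →
          {k : ℕ | ((f^[k]) '' K₁ ∩ K₂).Nonempty}.Finite) := by
  obtain ⟨hopen, hconv, -⟩ := hD
  obtain ⟨p, v, hv, hp⟩ := hline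
  obtain ⟨i, hvi⟩ : ∃ i, v i ≠ 0 := Function.ne_iff.mp hv
  set ℓ : (Fin N → ℂ) →L[ℂ] ℂ := (v i)⁻¹ • ContinuousLinearMap.proj i
  have hℓv : ℓ v = 1 := by simp [ℓ, hvi]
  obtain ⟨ζ, hper⟩ := exists_isPeriodicPt_expShift_two_on_line hℓv p
  have hz₀ : p + ζ • v ∈ D := hp ζ
  refine ⟨expShift ℓ v, (differentiable_expShift ℓ v).differentiableOn,
    mapsTo_expShift ℓ fun z hz => hopen.add_smul_mem_of_convex_of_complex_line hconv hp hz,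
    fun z _ => expShift_ne_self ℓ hv z, ⟨_, hz₀, hper⟩, fun hdiv => ?_⟩
  exact not_finite_setOf_iterate_image_inter_nonempty hper two_pos
    (hdiv _ _ (singleton_subset_iff.mpr hz₀) (singleton_subset_iff.mpr hz₀)
      isCompact_singleton isCompact_singleton)
end
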